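/- If T is an invertible bounded operator on a Hilbert space such that σ(T) ⊆ ∂𝔻 and T^{*-1} is hyponormal, then T is unitary. -/

import Mathlib

/-!
Hyponormal elements of a C⋆-algebra are normaloid: the C⋆-identity turns `a a⋆ ≤ a⋆ a` into
`‖a ^ (n + 1)‖ ^ 2 ≤ ‖a ^ n‖ ‖a ^ (n + 2)‖`, which forces `‖a ^ n‖ = ‖a‖ ^ n`, so `‖a‖` is the
spectral radius. Inversion is antitone on positive invertible elements, so the inverse of an
invertible hyponormal element is hyponormal. Hence if `S` is hyponormal with `σ(S) ⊆ ∂𝔻`, both `S`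
and `S⁻¹` are contractions, and this forces `S` to be unitary. Apply this to `S = T^{*-1}`, whose
spectrum is the image of `σ(T)` under `z ↦ z̄⁻¹`.
-/

def IsHyponormal {A : Type*} [Mul A] [Star A] [LE A] (a : A) : Prop :=
  a * star a ≤ star a * a

section SpectrumSphere

variable {A : Type*} [Ring A] [Algebra ℂ A]

lemma spectrum_units_inv_subset_sphere {u : Aˣ}
    (h : spectrum ℂ (u : A) ⊆ Metric.sphere 0 1) : spectrum ℂ (↑u⁻¹ : A) ⊆ Metric.sphere 0 1 := by
  rw [← spectrum.map_inv]
  intro z hz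
  simpa using h hz

lemma spectrum_star_subset_sphere [StarRing A] [StarModule ℂ A] {a : A}
    (h : spectrum ℂ a ⊆ Metric.sphere 0 1) : spectrum ℂ (star a) ⊆ Metric.sphere 0 1 := by
  rw [spectrum.map_star]
  intro z hz
  simpa using h hz

lemma isUnit_of_spectrum_subset_sphere {a : A} (h : spectrum ℂ a ⊆ Metric.sphere 0 1) :
    IsUnit a :=
  spectrum.isUnit_of_zero_notMem ℂ fun h0 ↦ by simpa using h h0

end SpectrumSphere

lemma Units.mem_unitary_of_inv_mem {R : Type*} [Monoid R] [StarMul R] (u : Rˣ)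
    (h : (↑u⁻¹ : R) ∈ unitary R) : (u : R) ∈ unitary R := by
  have h' := Unitary.inv_mem (show u⁻¹ ∈ unitary Rˣ by rwa [Units.unitary_eq])
  rwa [inv_inv, Units.unitary_eq] at h'

lemma CStarAlgebra.mem_unitary_of_norm_le_one_of_norm_inv_le_one {A : Type*} [CStarAlgebra A]
    [PartialOrder A] [StarOrderedRing A] (u : Aˣ) (hu : ‖(u : A)‖ ≤ 1) (hu_inv : ‖(↑u⁻¹ : A)‖ ≤ 1) :
    (u : A) ∈ unitary A := by
  refine u.isUnit.mem_unitary_of_star_mul_self (le_antisymm ?_ ?_)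
  · rw [← CStarAlgebra.norm_le_one_iff_of_nonneg _ (star_mul_self_nonneg _),
      CStarRing.norm_star_mul_self]
    exact mul_le_one₀ hu (norm_nonneg _) hu
  · -- inversion is antitone on positive units
    have hinv_eq : (↑(star u * u)⁻¹ : A) = ↑u⁻¹ * star (↑u⁻¹ : A) := by
      simp [Units.coe_star_inv]
    have hinv_nonneg : 0 ≤ (↑(star u * u)⁻¹ : A) := hinv_eq ▸ mul_star_self_nonneg _
    have hinv_le : (↑(star u * u)⁻¹ : A) ≤ 1 := by
      rw [← CStarAlgebra.norm_le_one_iff_of_nonneg _ hinv_nonneg, hinv_eq,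
        CStarRing.norm_self_mul_star]
      exact mul_le_one₀ hu_inv (norm_nonneg _) hu_inv
    simpa using CStarAlgebra.inv_le_inv (b := 1) hinv_nonneg hinv_le

namespace IsHyponormal

variable {A : Type*} [CStarAlgebra A] [PartialOrder A] [StarOrderedRing A] {a : A}

lemma norm_star_mul_le (ha : IsHyponormal a) (b : A) : ‖star a * b‖ ≤ ‖a * b‖ := by
  rw [mul_self_le_mul_self_iff (norm_nonneg _) (norm_nonneg _), ← CStarRing.norm_star_mul_self,
    ← CStarRing.norm_star_mul_self]
  refine CStarAlgebra.norm_le_norm_of_nonneg_of_le (star_mul_self_nonneg _) ?_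
  simpa only [star_mul, star_star, mul_assoc] using star_left_conjugate_le_conjugate ha b

lemma norm_pow_succ_mul_self_le (ha : IsHyponormal a) (n : ℕ) :
    ‖a ^ (n + 1)‖ * ‖a ^ (n + 1)‖ ≤ ‖a ^ n‖ * ‖a ^ (n + 2)‖ :=
  calc ‖a ^ (n + 1)‖ * ‖a ^ (n + 1)‖ = ‖star (a ^ n) * (star a * a ^ (n + 1))‖ := by
        rw [← CStarRing.norm_star_mul_self, ← mul_assoc, ← star_mul, ← pow_succ']
    _ ≤ ‖a ^ n‖ * ‖a * a ^ (n + 1)‖ := by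
        grw [norm_mul_le, norm_star, ha.norm_star_mul_le]
    _ = ‖a ^ n‖ * ‖a ^ (n + 2)‖ := by rw [← pow_succ']

lemma norm_pow [Nontrivial A] (ha : IsHyponormal a) (n : ℕ) : ‖a ^ n‖ = ‖a‖ ^ n := by
  suffices ∀ n, ‖a ^ n‖ = ‖a‖ ^ n ∧ ‖a ^ (n + 1)‖ = ‖a‖ ^ (n + 1) from (this n).1
  intro n
  induction n with
  | zero => simp
  | succ n ih =>
    refine ⟨ih.2, le_antisymm (norm_pow_le a _) ?_⟩
    rcases (norm_nonneg a).eq_or_lt with h0 | hpos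
    · rw [← h0, zero_pow (by omega)]; exact norm_nonneg _
    · have := ha.norm_pow_succ_mul_self_le n
      rw [ih.1, ih.2] at this
      refine le_of_mul_le_mul_left ?_ (pow_pos hpos n)
      calc ‖a‖ ^ n * ‖a‖ ^ (n + 1 + 1) = ‖a‖ ^ (n + 1) * ‖a‖ ^ (n + 1) := by ring
        _ ≤ ‖a‖ ^ n * ‖a ^ (n + 2)‖ := this

lemma spectralRadius_eq_nnnorm (ha : IsHyponormal a) : spectralRadius ℂ a = ‖a‖₊ := by
  nontriviality A
  refine tendsto_nhds_unique (spectrum.pow_nnnorm_pow_one_div_tendsto_nhds_spectralRadius a) ?_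
  refine tendsto_const_nhds.congr' ?_
  filter_upwards [Filter.eventually_ne_atTop 0] with n hn
  have : ‖a ^ n‖₊ = ‖a‖₊ ^ n := NNReal.eq (by simpa using ha.norm_pow n)
  rw [this, ENNReal.coe_pow, ← ENNReal.rpow_natCast, ← ENNReal.rpow_mul,
    mul_one_div_cancel (by exact_mod_cast hn), ENNReal.rpow_one]

lemma norm_le_one_of_spectrum_subset_sphere (ha : IsHyponormal a)
    (hs : spectrum ℂ a ⊆ Metric.sphere 0 1) : ‖a‖ ≤ 1 := by
  have : spectralRadius ℂ a ≤ 1 :=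
    iSup₂_le fun k hk ↦ by
      rw [ENNReal.coe_le_one_iff, ← NNReal.coe_le_one, coe_nnnorm,
        mem_sphere_zero_iff_norm.mp (hs hk)]
  rw [ha.spectralRadius_eq_nnnorm] at this
  exact_mod_cast this

lemma units_inv {u : Aˣ} (hu : IsHyponormal (u : A)) : IsHyponormal (↑u⁻¹ : A) := by
  have := CStarAlgebra.inv_le_inv (a := u * star u) (b := star u * u)
    (mul_star_self_nonneg _) hu
  simpa [IsHyponormal, Units.coe_star_inv] using this

theorem mem_unitary_of_spectrum_subset_sphere (ha : IsHyponormal a)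
    (hs : spectrum ℂ a ⊆ Metric.sphere 0 1) : a ∈ unitary A := by
  obtain ⟨u, rfl⟩ := isUnit_of_spectrum_subset_sphere hs
  exact CStarAlgebra.mem_unitary_of_norm_le_one_of_norm_inv_le_one u
    (ha.norm_le_one_of_spectrum_subset_sphere hs)
    (ha.units_inv.norm_le_one_of_spectrum_subset_sphere (spectrum_units_inv_subset_sphere hs))

end IsHyponormal

open ContinuousLinearMap

theorem stmt_5 {H : Type*} [NormedAddCommGroup H] [InnerProductSpace ℂ H] [CompleteSpace H]
    (T : H →L[ℂ] H)
    (hs : spectrum ℂ T ⊆ Metric.sphere (0 : ℂ) 1)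
    (hhyp : (adjoint (Ring.inverse (adjoint T)) * Ring.inverse (adjoint T)
      - Ring.inverse (adjoint T) * adjoint (Ring.inverse (adjoint T))).IsPositive) :
    adjoint T * T = 1 ∧ T * adjoint T = 1 := by
  obtain ⟨u, rfl⟩ := isUnit_of_spectrum_subset_sphere hs
  simp only [← star_eq_adjoint, ← Units.coe_star, Ring.inverse_unit] at hhyp ⊢
  have hS : IsHyponormal (↑(star u)⁻¹ : H →L[ℂ] H) := (le_def _ _).mpr hhyp
  have hS_unitary := hS.mem_unitary_of_spectrum_subset_sphere
    (spectrum_units_inv_subset_sphere (by simpa using spectrum_star_subset_sphere hs))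
  have hT_star : star (u : H →L[ℂ] H) ∈ unitary (H →L[ℂ] H) := by
    simpa using (star u).mem_unitary_of_inv_mem hS_unitary
  exact Unitary.mem_iff.mp (Unitary.star_mem_iff.mp hT_star)
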